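/- Let T be a bounded linear operator on a Banach space X. Then J_T^mix(0) = J_{T^n}^mix(0) for every positive integer n; that is, y ∈ X satisfies the property that there exists a sequence (x_k) with x_k → 0 and T^k x_k → y if and only if there exists a sequence (z_k) with z_k → 0 and (T^n)^k z_k → y. -/

import Mathlib

open Filter Topology

/-- The extended mixing limit set `J_T^mix(x)`: all `y` for which there exists a
sequence `(x_n)` with `x_n → x` and `T^n x_n → y`. -/
noncomputable def Jmix {X : Type*} [SeminormedAddCommGroup X] [NormedSpace ℂ X]
    (T : X →L[ℂ] X) (x : X) : Set X :=
  {y | ∃ u : ℕ → X, Tendsto u atTop (𝓝 x) ∧ Tendsto (fun n => (T ^ n) (u n)) atTop (𝓝 y)}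

/-! A sequence `z_k → 0` witnessing `y ∈ J_{T^n}^mix(0)` is spread out to
`x_m = T^(n - m % n) z_(m / n + 1)`, so that `T^m x_m = (T^n)^(m / n + 1) z_(m / n + 1)`;
only the finitely many powers `T^j`, `j ≤ n`, are applied to `z`, hence still `x_m → 0`.
The reverse inclusion passes to the subsequence of multiples of `n`. -/

theorem ContinuousLinearMap.tendsto_apply_zero_of_norm_le {𝕜 E F ι : Type*}
    [NontriviallyNormedField 𝕜] [SeminormedAddCommGroup E] [SeminormedAddCommGroup F]
    [NormedSpace 𝕜 E] [NormedSpace 𝕜 F] {l : Filter ι} {A : ι → E →L[𝕜] F} {v : ι → E}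
    {C : ℝ} (hA : ∀ i, ‖A i‖ ≤ C) (hv : Tendsto v l (𝓝 0)) :
    Tendsto (fun i => A i (v i)) l (𝓝 0) :=
  squeeze_zero_norm (fun i => (A i).le_of_opNorm_le (hA i) (v i))
    (by simpa using (tendsto_norm_zero.comp hv).const_mul C)

section

variable {X : Type*} [SeminormedAddCommGroup X] [NormedSpace ℂ X]

theorem Jmix_subset_Jmix_pow (T : X →L[ℂ] X) (x : X) {n : ℕ} (hn : 0 < n) :
    Jmix T x ⊆ Jmix (T ^ n) x := by
  rintro y ⟨u, hu, huy⟩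
  have hmul : Tendsto (fun k => n * k) atTop atTop := tendsto_id.const_mul_atTop' hn
  refine ⟨fun k => u (n * k), hu.comp hmul, (huy.comp hmul).congr fun k => ?_⟩
  simp only [Function.comp_apply, pow_mul]

theorem Jmix_pow_zero_subset_Jmix (T : X →L[ℂ] X) {n : ℕ} (hn : 0 < n) :
    Jmix (T ^ n) 0 ⊆ Jmix T 0 := by
  rintro y ⟨z, hz, hzy⟩
  have hk : Tendsto (fun m => m / n + 1) atTop atTop :=
    tendsto_atTop_mono (fun m => Nat.le_succ _) (Nat.tendsto_div_const_atTop hn.ne')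
  refine ⟨fun m => (T ^ (n - m % n)) (z (m / n + 1)), ?_, (hzy.comp hk).congr fun m => ?_⟩
  · refine ContinuousLinearMap.tendsto_apply_zero_of_norm_le
      (C := ∑ j ∈ Finset.range (n + 1), ‖T ^ j‖) (fun m => ?_) (hz.comp hk)
    exact Finset.single_le_sum (f := fun j => ‖T ^ j‖) (fun j _ => norm_nonneg _)
      (Finset.mem_range.2 (by omega))
  · have hexp : m + (n - m % n) = n * (m / n + 1) := by
      have hdiv := Nat.div_add_mod m n
      have hmod := Nat.mod_lt m hn
      rw [mul_add, mul_one]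
      omega
    simp only [Function.comp_apply, ← pow_mul, ← hexp, pow_add, mul_apply_eq_comp]

end

theorem stmt16_general {X : Type*} [NormedAddCommGroup X] [NormedSpace ℂ X]
    (T : X →L[ℂ] X) (n : ℕ) (hn : 0 < n) :
    Jmix T 0 = Jmix (T ^ n) 0 :=
  (Jmix_subset_Jmix_pow T 0 hn).antisymm (Jmix_pow_zero_subset_Jmix T hn)

/-- For every positive integer `n`, `J_T^mix(0) = J_{T^n}^mix(0)`. -/
theorem stmt16 {X : Type*} [NormedAddCommGroup X] [NormedSpace ℂ X] [CompleteSpace X]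
    (T : X →L[ℂ] X) (n : ℕ) (hn : 0 < n) :
    Jmix T 0 = Jmix (T ^ n) 0 :=
  stmt16_general T n hn
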